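/- In the fixed-stress error framework (continuous), assume additionally: (a) there is β_s > 0 such that for every s ∈ Q there exists w ∈ U with D w = s and ‖E w‖ ≤ β_s⁻¹ ‖s‖; (b) L ≥ 1/(λ + c_K²). Set λ₀ := max{1, λ}, R := min{R₁, …, Rₙ}, Λ_e := M + R·I + (1/λ₀ + L)·J ∈ ℝ^{n×n} (I the identity, J the all-ones matrix), ρ² := 1/(L⁻¹/(β_s⁻² + λ) + 1), and define, for u ∈ U, v ∈ V₁ × … × Vₙ and p ∈ Qⁿ: ‖u‖_U² := ‖E u‖² + λ‖D u‖², ‖v‖_{V_e}² := Σᵢ Rᵢ⁻¹ ‖vᵢ‖² + Σᵢ,ⱼ (Λ_e⁻¹)ᵢⱼ ⟨Dⱼ vⱼ, Dᵢ vᵢ⟩, ‖p‖_{P_e}² := Σᵢ,ⱼ (Λ_e)ᵢⱼ ⟨pⱼ, pᵢ⟩. Assume also: (c) stability hypothesis: there is C₁ > 0 such that whenever g ∈ Q and (x_u, x_v, x_p) ∈ U × (V₁ × … × Vₙ) × Qⁿ satisfy ⟨E x_u, E w⟩ + λ⟨D x_u, D w⟩ − ⟨Σᵢ x_{p,i}, D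 w⟩ = 0 for all w ∈ U, Σᵢ Rᵢ⁻¹⟨x_{v,i}, zᵢ⟩ − Σᵢ⟨x_{p,i}, Dᵢ zᵢ⟩ = 0 for all (z₁, …, zₙ) ∈ V₁ × … × Vₙ, and −⟨D x_u, Σᵢ qᵢ⟩ − Σᵢ⟨Dᵢ x_{v,i}, qᵢ⟩ − Σᵢ,ⱼ (M + L·J)ᵢⱼ ⟨x_{p,j}, qᵢ⟩ = ⟨g, Σᵢ qᵢ⟩ for all (q₁, …, qₙ) ∈ Qⁿ, then ‖x_u‖_U + ‖x_v‖_{V_e} + ‖x_p‖_{P_e} ≤ C₁ (Σᵢ,ⱼ (Λ_e⁻¹)ᵢⱼ)^{1/2} ‖g‖. Then for every m ≥ 0: ‖e_v^{m+1}‖_{V_e} + ‖e_p^{m+1}‖_{P_e} ≤ 3 C₁ √L ρ^m ‖Σᵢ e_{p,i}^0‖. -/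

import Mathlib

/-!
Write `sₘ = ∑ᵢ e_{p,i}^m`. Testing the elasticity equation with `e_u^m` shows that
`⟪sₘ, D e_u^m⟫` is the energy `‖E e_u^m‖² + λ ‖D e_u^m‖²`; by Korn's inequality and
`L (λ + c_K²) ≥ 1` it dominates `‖D e_u^m‖² / L`, and by the inf-sup condition it dominates
`‖sₘ‖² / (β_s⁻² + λ)`. Testing the pressure equation with `e_p^{m+1}` and the flux equation with
`e_v^{m+1}` (the flux and `M` terms are nonnegative) gives
`L ‖sₘ₊₁‖² ≤ ⟪L sₘ - D e_u^m, sₘ₊₁⟫`, and expanding `‖L sₘ - D e_u^m‖²` with the two energy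
bounds yields the contraction `‖sₘ₊₁‖ ≤ ρ ‖sₘ‖`.

The new iterate `(e_u^{m+1}, e_v^{m+1}, e_p^{m+1})` solves the shifted MPET system with load
`g = D e_u^m - D e_u^{m+1} - L sₘ`, and `‖g‖ ≤ 3 L ρ^m ‖s₀‖`. Since `xᵀ Λ_e x ≥ L (∑ᵢ xᵢ)²`,
testing with `x = Λ_e⁻¹ 𝟙` gives `∑ᵢⱼ (Λ_e⁻¹)ᵢⱼ ≤ 1 / L`, and the stability estimate concludes.
-/

open scoped RealInnerProductSpace
open Matrix

section Forms

variable {ι Q : Type*} [Fintype ι] [NormedAddCommGroup Q] [InnerProductSpace ℝ Q]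

theorem Matrix.PosSemidef.sum_mul_inner_nonneg {M : Matrix ι ι ℝ} (hM : M.PosSemidef)
    (p : ι → Q) : 0 ≤ ∑ i, ∑ j, M i j * ⟪p j, p i⟫ := by
  simpa [dotProduct, mulVec, gram_apply, real_inner_comm] using
    (hM.hadamard (posSemidef_gram ℝ p)).dotProduct_mulVec_nonneg (fun _ => 1)

theorem sum_add_smul_allOnes_mul_inner (M : Matrix ι ι ℝ) (c : ℝ) (p q : ι → Q) :
    ∑ i, ∑ j, ((M + c • Matrix.of fun _ _ => (1 : ℝ) : Matrix ι ι ℝ)) i j * ⟪p j, q i⟫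
      = ∑ i, ∑ j, M i j * ⟪p j, q i⟫ + c * ⟪∑ j, p j, ∑ i, q i⟫ := by
  simp only [Matrix.add_apply, Matrix.smul_apply, of_apply, smul_eq_mul, mul_one, add_mul,
    Finset.sum_add_distrib, sum_inner, inner_sum, Finset.mul_sum]

theorem Matrix.sum_inv_apply_le_of_le_dotProduct_mulVec [DecidableEq ι] {A : Matrix ι ι ℝ}
    {c : ℝ} (hc : 0 < c) (hA : ∀ x, c * (∑ i, x i) ^ 2 ≤ x ⬝ᵥ (A *ᵥ x)) :
    ∑ i, ∑ j, A⁻¹ i j ≤ c⁻¹ := by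
  by_cases hdet : IsUnit A.det
  · set y := A⁻¹ *ᵥ fun _ => (1 : ℝ)
    have hAy : A *ᵥ y = fun _ => 1 := by rw [mulVec_mulVec, mul_nonsing_inv _ hdet, one_mulVec]
    have hsum : ∑ i, ∑ j, A⁻¹ i j = ∑ i, y i := by simp [y, mulVec, dotProduct]
    have hy : c * (∑ i, y i) ^ 2 ≤ ∑ i, y i := by simpa [hAy, dotProduct] using hA y
    rw [hsum, ← mul_one c⁻¹, le_inv_mul_iff₀ hc]
    nlinarith
  · simp only [nonsing_inv_apply_not_isUnit _ hdet, zero_apply, Finset.sum_const_zero]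
    positivity

theorem Matrix.PosSemidef.sum_inv_add_smul_one_add_smul_allOnes_le [DecidableEq ι]
    {M : Matrix ι ι ℝ} (hM : M.PosSemidef) {R c : ℝ} (hR : 0 ≤ R) (hc : 0 < c) :
    ∑ i, ∑ j, ((M + R • (1 : Matrix ι ι ℝ) + c • Matrix.of fun _ _ => (1 : ℝ))⁻¹ : Matrix ι ι ℝ) i j
      ≤ c⁻¹ := by
  refine sum_inv_apply_le_of_le_dotProduct_mulVec hc fun x => ?_
  have hMx : 0 ≤ x ⬝ᵥ (M *ᵥ x) := by simpa using hM.dotProduct_mulVec_nonneg x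
  have hxx : 0 ≤ x ⬝ᵥ x := by simpa using dotProduct_star_self_nonneg x
  have hJ : x ⬝ᵥ ((Matrix.of fun _ _ => (1 : ℝ)) *ᵥ x) = (∑ i, x i) ^ 2 := by
    simp [dotProduct, mulVec, sq, Finset.sum_mul]
  simp only [add_mulVec, smul_mulVec, one_mulVec, dotProduct_add, dotProduct_smul, hJ, smul_eq_mul]
  nlinarith [mul_nonneg hR hxx]

end Forms

theorem mul_norm_le_of_mul_norm_sq_le_inner {F : Type*} [NormedAddCommGroup F]
    [InnerProductSpace ℝ F] {c : ℝ} {x y : F} (h : c * ‖x‖ ^ 2 ≤ ⟪y, x⟫) : c * ‖x‖ ≤ ‖y‖ := by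
  rcases (norm_nonneg x).eq_or_lt with hx | hx
  · rw [← hx, mul_zero]; exact norm_nonneg y
  · refine le_of_mul_le_mul_right ?_ hx
    calc c * ‖x‖ * ‖x‖ = c * ‖x‖ ^ 2 := by ring
      _ ≤ ‖y‖ * ‖x‖ := h.trans (real_inner_le_norm y x)

theorem norm_sub_sub_smul_le {F : Type*} [SeminormedAddCommGroup F] [NormedSpace ℝ F] {L : ℝ}
    (hL : 0 ≤ L) {d d' s s' : F} (hd : ‖d‖ ≤ L * ‖s‖) (hd' : ‖d'‖ ≤ L * ‖s'‖)
    (hs : ‖s'‖ ≤ ‖s‖) : ‖d - d' - L • s‖ ≤ 3 * L * ‖s‖ := by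
  have hLs : ‖L • s‖ ≤ L * ‖s‖ := by rw [norm_smul, Real.norm_of_nonneg hL]
  linarith [norm_sub_le_of_le (norm_sub_le_of_le hd hd') hLs, mul_le_mul_of_nonneg_left hs hL]

theorem norm_smul_sub_sq_le {F : Type*} [NormedAddCommGroup F] [InnerProductSpace ℝ F]
    {L A : ℝ} (hL : 0 < L) (hA : 0 < A) {x y : F}
    (hy : ‖y‖ ^ 2 ≤ L * ⟪x, y⟫) (hx : ‖x‖ ^ 2 ≤ A * ⟪x, y⟫) :
    ‖L • x - y‖ ^ 2 ≤ (1 - L⁻¹ / A) * (L * ‖x‖) ^ 2 := by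
  have hxy : ‖x‖ ^ 2 / A ≤ ⟪x, y⟫ := by rwa [div_le_iff₀' hA]
  calc ‖L • x - y‖ ^ 2 = L ^ 2 * ‖x‖ ^ 2 - 2 * L * ⟪x, y⟫ + ‖y‖ ^ 2 := by
        rw [norm_sub_sq_real, real_inner_smul_left, norm_smul, Real.norm_of_nonneg hL.le]; ring
    _ ≤ L ^ 2 * ‖x‖ ^ 2 - L * (‖x‖ ^ 2 / A) := by nlinarith [mul_le_mul_of_nonneg_left hxy hL.le]
    _ = (1 - L⁻¹ / A) * (L * ‖x‖) ^ 2 := by field_simp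

theorem one_sub_le_one_div_add_one {t : ℝ} (ht : 0 ≤ t) : 1 - t ≤ 1 / (t + 1) := by
  rw [le_div_iff₀ (by positivity)]
  nlinarith [sq_nonneg t]

section Elasticity

variable {U H Q : Type*} [NormedAddCommGroup U] [InnerProductSpace ℝ U]
  [NormedAddCommGroup H] [InnerProductSpace ℝ H] [NormedAddCommGroup Q] [InnerProductSpace ℝ Q]
  {E : U →L[ℝ] H} {D : U →L[ℝ] Q} {lam : ℝ} {u : U} {s : Q}

theorem inner_eq_energy (hu : ∀ w, ⟪E u, E w⟫ + lam * ⟪D u, D w⟫ = ⟪s, D w⟫) :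
    ⟪s, D u⟫ = ‖E u‖ ^ 2 + lam * ‖D u‖ ^ 2 := by
  rw [← hu u, real_inner_self_eq_norm_sq, real_inner_self_eq_norm_sq]

theorem norm_sq_le_mul_inner_of_korn (hu : ∀ w, ⟪E u, E w⟫ + lam * ⟪D u, D w⟫ = ⟪s, D w⟫)
    {cK L : ℝ} (hcK : 0 ≤ cK) (hKorn : cK * ‖D u‖ ≤ ‖E u‖) (hL : 0 ≤ L)
    (hLK : 1 ≤ L * (lam + cK ^ 2)) : ‖D u‖ ^ 2 ≤ L * ⟪s, D u⟫ := by
  have hKorn2 : cK ^ 2 * ‖D u‖ ^ 2 ≤ ‖E u‖ ^ 2 := by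
    rw [← mul_pow]; exact pow_le_pow_left₀ (by positivity) hKorn 2
  rw [inner_eq_energy hu]
  nlinarith [mul_le_mul_of_nonneg_left hKorn2 hL, sq_nonneg ‖D u‖]

theorem norm_le_mul_norm_of_korn (hu : ∀ w, ⟪E u, E w⟫ + lam * ⟪D u, D w⟫ = ⟪s, D w⟫)
    {cK L : ℝ} (hcK : 0 ≤ cK) (hKorn : cK * ‖D u‖ ≤ ‖E u‖) (hL : 0 ≤ L)
    (hLK : 1 ≤ L * (lam + cK ^ 2)) : ‖D u‖ ≤ L * ‖s‖ := by
  have h := norm_sq_le_mul_inner_of_korn hu hcK hKorn hL hLK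
  rw [← real_inner_smul_left, ← one_mul (‖D u‖ ^ 2)] at h
  simpa [norm_smul, Real.norm_of_nonneg hL] using mul_norm_le_of_mul_norm_sq_le_inner h

theorem norm_sq_le_mul_inner_of_infsup (hu : ∀ w, ⟪E u, E w⟫ + lam * ⟪D u, D w⟫ = ⟪s, D w⟫)
    (hlam : 0 ≤ lam) {b : ℝ} {w : U} (hw : D w = s) (hEw : ‖E w‖ ≤ b * ‖s‖) :
    ‖s‖ ^ 2 ≤ (b ^ 2 + lam) * ⟪s, D u⟫ := by
  have hs : ‖s‖ ^ 2 ≤ ‖E u‖ * (b * ‖s‖) + lam * (‖D u‖ * ‖s‖) := by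
    have h := hu w
    rw [hw, real_inner_self_eq_norm_sq] at h
    rw [← h]
    gcongr
    · exact (real_inner_le_norm _ _).trans (mul_le_mul_of_nonneg_left hEw (norm_nonneg _))
    · exact real_inner_le_norm _ _
  -- Cauchy–Schwarz in ℝ² for the weights `(b, √lam)`
  rw [inner_eq_energy hu]
  nlinarith [sq_nonneg (‖s‖ - (b * ‖E u‖ + lam * ‖D u‖)),
    mul_nonneg hlam (sq_nonneg (‖E u‖ - b * ‖D u‖)), norm_nonneg s]

theorem norm_smul_sub_le_of_korn_infsup (hu : ∀ w, ⟪E u, E w⟫ + lam * ⟪D u, D w⟫ = ⟪s, D w⟫)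
    {cK L : ℝ} (hlam : 0 < lam) (hL : 0 < L) (hcK : 0 ≤ cK) (hKorn : cK * ‖D u‖ ≤ ‖E u‖)
    (hLK : 1 ≤ L * (lam + cK ^ 2)) {b : ℝ} {w : U} (hw : D w = s) (hEw : ‖E w‖ ≤ b * ‖s‖) :
    ‖L • s - D u‖ ≤ √(1 / (L⁻¹ / (b ^ 2 + lam) + 1)) * (L * ‖s‖) := by
  have hA : 0 < b ^ 2 + lam := by positivity
  have hsq := norm_smul_sub_sq_le hL hA (norm_sq_le_mul_inner_of_korn hu hcK hKorn hL.le hLK)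
    (norm_sq_le_mul_inner_of_infsup hu hlam.le hw hEw)
  have hρ := one_sub_le_one_div_add_one (t := L⁻¹ / (b ^ 2 + lam)) (by positivity)
  refine le_of_pow_le_pow_left₀ two_ne_zero (by positivity) ?_
  rw [mul_pow, Real.sq_sqrt (by positivity)]
  exact hsq.trans (mul_le_mul_of_nonneg_right hρ (sq_nonneg _))

end Elasticity

section FixedStress

variable {U H Q ι : Type*} [Fintype ι] [NormedAddCommGroup U] [InnerProductSpace ℝ U]
  [NormedAddCommGroup H] [InnerProductSpace ℝ H] [NormedAddCommGroup Q] [InnerProductSpace ℝ Q]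
  {V : ι → Type*} [∀ i, NormedAddCommGroup (V i)] [∀ i, InnerProductSpace ℝ (V i)]
  {E : U →L[ℝ] H} {D : U →L[ℝ] Q} {Dv : ∀ i, V i →L[ℝ] Q} {Rinv : ι → ℝ}
  {M : Matrix ι ι ℝ} {lam L : ℝ} {u : U} {v : ∀ i, V i} {p p₀ : ι → Q} {d : Q}

theorem sum_inner_flux_pressure_nonneg (hRinv : ∀ i, 0 ≤ Rinv i)
    (hv : ∀ z : ∀ i, V i, ∑ i, Rinv i * ⟪v i, z i⟫ - ∑ i, ⟪p i, Dv i (z i)⟫ = 0) :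
    0 ≤ ∑ i, ⟪Dv i (v i), p i⟫ := by
  have h := hv v
  simp only [real_inner_self_eq_norm_sq, sub_eq_zero] at h
  rw [Finset.sum_congr rfl fun i _ => real_inner_comm (p i) (Dv i (v i)), ← h]
  exact Finset.sum_nonneg fun i _ => mul_nonneg (hRinv i) (sq_nonneg _)

theorem mul_norm_sq_sum_le_inner_of_fixed_stress_step (hRinv : ∀ i, 0 ≤ Rinv i)
    (hM : M.PosSemidef)
    (hv : ∀ z : ∀ i, V i, ∑ i, Rinv i * ⟪v i, z i⟫ - ∑ i, ⟪p i, Dv i (z i)⟫ = 0)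
    (hp : ∀ q : ι → Q, -(∑ i, ⟪Dv i (v i), q i⟫) - ∑ i, ∑ j, M i j * ⟪p j, q i⟫
        - L * ⟪∑ j, p j, ∑ i, q i⟫ = -(L * ⟪∑ j, p₀ j, ∑ i, q i⟫) + ⟪d, ∑ i, q i⟫) :
    L * ‖∑ i, p i‖ ^ 2 ≤ ⟪L • ∑ i, p₀ i - d, ∑ i, p i⟫ := by
  have h := hp p
  rw [real_inner_self_eq_norm_sq] at h
  rw [inner_sub_left, real_inner_smul_left]
  linarith [sum_inner_flux_pressure_nonneg hRinv hv, hM.sum_mul_inner_nonneg p]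

theorem fixed_stress_step_eq_shifted
    (hp : ∀ q : ι → Q, -(∑ i, ⟪Dv i (v i), q i⟫) - ∑ i, ∑ j, M i j * ⟪p j, q i⟫
        - L * ⟪∑ j, p j, ∑ i, q i⟫ = -(L * ⟪∑ j, p₀ j, ∑ i, q i⟫) + ⟪d, ∑ i, q i⟫)
    (d' : Q) (q : ι → Q) :
    -⟪d', ∑ i, q i⟫ - ∑ i, ⟪Dv i (v i), q i⟫
        - ∑ i, ∑ j, ((M + L • Matrix.of fun _ _ => (1 : ℝ) : Matrix ι ι ℝ)) i j * ⟪p j, q i⟫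
      = ⟪d - d' - L • ∑ i, p₀ i, ∑ i, q i⟫ := by
  rw [sum_add_smul_allOnes_mul_inner, inner_sub_left, inner_sub_left, real_inner_smul_left]
  linarith [hp q]

theorem norm_sum_le_of_fixed_stress_step (hRinv : ∀ i, 0 ≤ Rinv i) (hM : M.PosSemidef)
    (hv : ∀ z : ∀ i, V i, ∑ i, Rinv i * ⟪v i, z i⟫ - ∑ i, ⟪p i, Dv i (z i)⟫ = 0)
    (hp : ∀ q : ι → Q, -(∑ i, ⟪Dv i (v i), q i⟫) - ∑ i, ∑ j, M i j * ⟪p j, q i⟫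
        - L * ⟪∑ j, p j, ∑ i, q i⟫ = -(L * ⟪∑ j, p₀ j, ∑ i, q i⟫) + ⟪D u, ∑ i, q i⟫)
    (hu : ∀ w, ⟪E u, E w⟫ + lam * ⟪D u, D w⟫ = ⟪∑ i, p₀ i, D w⟫)
    (hlam : 0 < lam) (hL : 0 < L) {cK : ℝ} (hcK : 0 ≤ cK) (hKorn : cK * ‖D u‖ ≤ ‖E u‖)
    (hLK : 1 ≤ L * (lam + cK ^ 2)) {b : ℝ} {w : U} (hw : D w = ∑ i, p₀ i)
    (hEw : ‖E w‖ ≤ b * ‖∑ i, p₀ i‖) :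
    ‖∑ i, p i‖ ≤ √(1 / (L⁻¹ / (b ^ 2 + lam) + 1)) * ‖∑ i, p₀ i‖ := by
  have hstep := mul_norm_le_of_mul_norm_sq_le_inner
    (mul_norm_sq_sum_le_inner_of_fixed_stress_step hRinv hM hv hp)
  have hres := norm_smul_sub_le_of_korn_infsup hu hlam hL hcK hKorn hLK hw hEw
  refine le_of_mul_le_mul_left ?_ hL
  calc L * ‖∑ i, p i‖ ≤ √(1 / (L⁻¹ / (b ^ 2 + lam) + 1)) * (L * ‖∑ i, p₀ i‖) := hstep.trans hres
    _ = L * (√(1 / (L⁻¹ / (b ^ 2 + lam) + 1)) * ‖∑ i, p₀ i‖) := by ring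

end FixedStress

theorem fixed_stress_flux_pressure_decay_general
    {U H Q : Type*}
    [NormedAddCommGroup U] [InnerProductSpace ℝ U] [CompleteSpace U]
    [NormedAddCommGroup H] [InnerProductSpace ℝ H] [CompleteSpace H]
    [NormedAddCommGroup Q] [InnerProductSpace ℝ Q] [CompleteSpace Q]
    (n : ℕ)
    (V : Fin n → Type*)
    [∀ i, NormedAddCommGroup (V i)] [∀ i, InnerProductSpace ℝ (V i)]
    [∀ i, CompleteSpace (V i)]
    (E : U →L[ℝ] H) (D : U →L[ℝ] Q) (Dv : ∀ i, V i →L[ℝ] Q)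
    (lam L cK : ℝ) (Rinv : Fin n → ℝ)
    (hlam : 0 < lam) (hL : 0 < L) (hRinv : ∀ i, 0 < Rinv i) (hcK : 0 < cK)
    (M : Matrix (Fin n) (Fin n) ℝ) (hM : M.PosSemidef)
    (hKorn : ∀ w : U, cK * ‖D w‖ ≤ ‖E w‖)
    (eu : ℕ → U) (ev : ℕ → ∀ i, V i) (ep : ℕ → Fin n → Q)
    (heq1 : ∀ (m : ℕ) (q : Fin n → Q),
      -(∑ i, ⟪Dv i (ev (m + 1) i), q i⟫)
          - ∑ i, ∑ j, M i j * ⟪ep (m + 1) j, q i⟫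
          - L * ⟪∑ j, ep (m + 1) j, ∑ i, q i⟫
        = -(L * ⟪∑ j, ep m j, ∑ i, q i⟫) + ⟪D (eu m), ∑ i, q i⟫)
    (heq2 : ∀ (m : ℕ) (z : ∀ i, V i),
      ∑ i, Rinv i * ⟪ev (m + 1) i, z i⟫ - ∑ i, ⟪ep (m + 1) i, Dv i (z i)⟫ = 0)
    (heq3 : ∀ (m : ℕ) (w : U),
      ⟪E (eu m), E w⟫ + lam * ⟪D (eu m), D w⟫ = ⟪∑ i, ep m i, D w⟫)
    (hLge : 1 / (lam + cK ^ 2) ≤ L)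
    (βs : ℝ)
    (hinfsup : ∀ s : Q, ∃ w : U, D w = s ∧ ‖E w‖ ≤ βs⁻¹ * ‖s‖)
    (lam0 : ℝ) (hlam0 : lam0 = max 1 lam)
    (R : ℝ) (hRmin : IsLeast (Set.range fun i => (Rinv i)⁻¹) R)
    (Λe : Matrix (Fin n) (Fin n) ℝ)
    (hΛe : Λe = M + R • (1 : Matrix (Fin n) (Fin n) ℝ)
      + (1 / lam0 + L) • Matrix.of fun _ _ => (1 : ℝ))
    (ρ2 : ℝ) (hρ2 : ρ2 = 1 / (L⁻¹ / ((βs ^ 2)⁻¹ + lam) + 1))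
    (nU : U → ℝ) (hnU : ∀ u : U, nU u = Real.sqrt (‖E u‖ ^ 2 + lam * ‖D u‖ ^ 2))
    (nVe : (∀ i, V i) → ℝ)
    (nPe : (Fin n → Q) → ℝ)
    (C1 : ℝ) (hC1 : 0 < C1)
    (hstab : ∀ (g : Q) (xu : U) (xv : ∀ i, V i) (xp : Fin n → Q),
      (∀ w : U, ⟪E xu, E w⟫ + lam * ⟪D xu, D w⟫ - ⟪∑ i, xp i, D w⟫ = 0) →
      (∀ z : ∀ i, V i,
        ∑ i, Rinv i * ⟪xv i, z i⟫ - ∑ i, ⟪xp i, Dv i (z i)⟫ = 0) →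
      (∀ q : Fin n → Q,
        -⟪D xu, ∑ i, q i⟫ - ∑ i, ⟪Dv i (xv i), q i⟫
            - ∑ i, ∑ j, ((M + L • Matrix.of fun _ _ => (1 : ℝ) : Matrix (Fin n) (Fin n) ℝ)) i j * ⟪xp j, q i⟫
          = ⟪g, ∑ i, q i⟫) →
      nU xu + nVe xv + nPe xp ≤ C1 * Real.sqrt (∑ i, ∑ j, Λe⁻¹ i j) * ‖g‖) :
    ∀ m : ℕ,
      nVe (ev (m + 1)) + nPe (ep (m + 1))
        ≤ 3 * C1 * Real.sqrt L * Real.sqrt ρ2 ^ m * ‖∑ i, ep 0 i‖ := by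
  have hLK : 1 ≤ L * (lam + cK ^ 2) := by rw [div_le_iff₀ (by positivity)] at hLge; linarith
  have hρ1 : √ρ2 ≤ 1 := by
    rw [Real.sqrt_le_one, hρ2]
    exact div_le_one_of_le₀ (le_add_of_nonneg_left (by positivity)) (by positivity)
  have hDu : ∀ k, ‖D (eu k)‖ ≤ L * ‖∑ i, ep k i‖ := fun k =>
    norm_le_mul_norm_of_korn (heq3 k) hcK.le (hKorn _) hL.le hLK
  have hcontr : ∀ k, ‖∑ i, ep (k + 1) i‖ ≤ √ρ2 * ‖∑ i, ep k i‖ := fun k => by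
    obtain ⟨w, hw, hEw⟩ := hinfsup (∑ i, ep k i)
    rw [hρ2, ← inv_pow]
    exact norm_sum_le_of_fixed_stress_step (fun i => (hRinv i).le) hM (heq2 k) (heq1 k) (heq3 k)
      hlam hL hcK.le (hKorn _) hLK hw hEw
  have hΛ : ∑ i, ∑ j, Λe⁻¹ i j ≤ L⁻¹ := by
    obtain ⟨⟨i, hi⟩, -⟩ := hRmin
    have hc : L ≤ 1 / lam0 + L := le_add_of_nonneg_left (by rw [hlam0]; positivity)
    rw [hΛe]
    exact (hM.sum_inv_add_smul_one_add_smul_allOnes_le (hi ▸ (inv_pos.2 (hRinv i)).le)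
      (hL.trans_le hc)).trans (inv_anti₀ hL hc)
  intro m
  have hg := norm_sub_sub_smul_le hL.le (hDu m) (hDu (m + 1))
    ((hcontr m).trans (mul_le_of_le_one_left (norm_nonneg _) hρ1))
  have hdecay : ‖∑ i, ep m i‖ ≤ √ρ2 ^ m * ‖∑ i, ep 0 i‖ :=
    le_geom (u := fun k => ‖∑ i, ep k i‖) (Real.sqrt_nonneg _) m fun k _ => hcontr k
  have hstep := hstab _ (eu (m + 1)) (ev (m + 1)) (ep (m + 1))
    (fun w => sub_eq_zero.2 (heq3 (m + 1) w)) (heq2 m) (fixed_stress_step_eq_shifted (heq1 m) _)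
  have hnU0 : 0 ≤ nU (eu (m + 1)) := (hnU _).symm ▸ Real.sqrt_nonneg _
  calc nVe (ev (m + 1)) + nPe (ep (m + 1))
      ≤ C1 * √(∑ i, ∑ j, Λe⁻¹ i j) * ‖D (eu m) - D (eu (m + 1)) - L • ∑ i, ep m i‖ := by
        linarith
    _ ≤ C1 * √L⁻¹ * (3 * L * (√ρ2 ^ m * ‖∑ i, ep 0 i‖)) := by
        gcongr
        exact hg.trans (mul_le_mul_of_nonneg_left hdecay (by positivity))
    _ = 3 * C1 * √L * √ρ2 ^ m * ‖∑ i, ep 0 i‖ := by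
        rw [Real.sqrt_inv]
        field_simp
        rw [Real.sq_sqrt hL.le]

/-- Flux–pressure estimate (error_ev_ep) of Theorem 3: under the abstract Stokes inf-sup
condition, L ≥ 1/(λ + c_K²) and the parameter-robust stability hypothesis for the shifted
MPET system, the flux and pressure errors decay geometrically in the parameter-dependent
norms ‖·‖_{V_e}, ‖·‖_{P_e}:
‖e_v^{m+1}‖_{V_e} + ‖e_p^{m+1}‖_{P_e} ≤ 3 C₁ √L ρ^m ‖Σᵢ e_{p,i}^0‖. -/
theorem fixed_stress_flux_pressure_decay
    {U H Q : Type*}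
    [NormedAddCommGroup U] [InnerProductSpace ℝ U] [CompleteSpace U]
    [NormedAddCommGroup H] [InnerProductSpace ℝ H] [CompleteSpace H]
    [NormedAddCommGroup Q] [InnerProductSpace ℝ Q] [CompleteSpace Q]
    (n : ℕ) (hn : 1 ≤ n)
    (V : Fin n → Type*)
    [∀ i, NormedAddCommGroup (V i)] [∀ i, InnerProductSpace ℝ (V i)]
    [∀ i, CompleteSpace (V i)]
    (E : U →L[ℝ] H) (D : U →L[ℝ] Q) (Dv : ∀ i, V i →L[ℝ] Q)
    (lam L cK : ℝ) (Rinv : Fin n → ℝ)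
    (hlam : 0 < lam) (hL : 0 < L) (hRinv : ∀ i, 0 < Rinv i) (hcK : 0 < cK)
    (M : Matrix (Fin n) (Fin n) ℝ) (hM : M.PosSemidef)
    (hKorn : ∀ w : U, cK * ‖D w‖ ≤ ‖E w‖)
    (eu : ℕ → U) (ev : ℕ → ∀ i, V i) (ep : ℕ → Fin n → Q)
    (heq1 : ∀ (m : ℕ) (q : Fin n → Q),
      -(∑ i, ⟪Dv i (ev (m + 1) i), q i⟫)
          - ∑ i, ∑ j, M i j * ⟪ep (m + 1) j, q i⟫
          - L * ⟪∑ j, ep (m + 1) j, ∑ i, q i⟫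
        = -(L * ⟪∑ j, ep m j, ∑ i, q i⟫) + ⟪D (eu m), ∑ i, q i⟫)
    (heq2 : ∀ (m : ℕ) (z : ∀ i, V i),
      ∑ i, Rinv i * ⟪ev (m + 1) i, z i⟫ - ∑ i, ⟪ep (m + 1) i, Dv i (z i)⟫ = 0)
    (heq3 : ∀ (m : ℕ) (w : U),
      ⟪E (eu m), E w⟫ + lam * ⟪D (eu m), D w⟫ = ⟪∑ i, ep m i, D w⟫)
    (hLge : 1 / (lam + cK ^ 2) ≤ L)
    (βs : ℝ) (hβs : 0 < βs)
    (hinfsup : ∀ s : Q, ∃ w : U, D w = s ∧ ‖E w‖ ≤ βs⁻¹ * ‖s‖)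
    (lam0 : ℝ) (hlam0 : lam0 = max 1 lam)
    (R : ℝ) (hRmin : IsLeast (Set.range fun i => (Rinv i)⁻¹) R)
    (Λe : Matrix (Fin n) (Fin n) ℝ)
    (hΛe : Λe = M + R • (1 : Matrix (Fin n) (Fin n) ℝ)
      + (1 / lam0 + L) • Matrix.of fun _ _ => (1 : ℝ))
    (ρ2 : ℝ) (hρ2 : ρ2 = 1 / (L⁻¹ / ((βs ^ 2)⁻¹ + lam) + 1))
    (nU : U → ℝ) (hnU : ∀ u : U, nU u = Real.sqrt (‖E u‖ ^ 2 + lam * ‖D u‖ ^ 2))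
    (nVe : (∀ i, V i) → ℝ)
    (hnVe : ∀ v : ∀ i, V i, nVe v = Real.sqrt (∑ i, Rinv i * ‖v i‖ ^ 2
      + ∑ i, ∑ j, Λe⁻¹ i j * ⟪Dv j (v j), Dv i (v i)⟫))
    (nPe : (Fin n → Q) → ℝ)
    (hnPe : ∀ p : Fin n → Q, nPe p = Real.sqrt (∑ i, ∑ j, Λe i j * ⟪p j, p i⟫))
    (C1 : ℝ) (hC1 : 0 < C1)
    (hstab : ∀ (g : Q) (xu : U) (xv : ∀ i, V i) (xp : Fin n → Q),
      (∀ w : U, ⟪E xu, E w⟫ + lam * ⟪D xu, D w⟫ - ⟪∑ i, xp i, D w⟫ = 0) →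
      (∀ z : ∀ i, V i,
        ∑ i, Rinv i * ⟪xv i, z i⟫ - ∑ i, ⟪xp i, Dv i (z i)⟫ = 0) →
      (∀ q : Fin n → Q,
        -⟪D xu, ∑ i, q i⟫ - ∑ i, ⟪Dv i (xv i), q i⟫
            - ∑ i, ∑ j, ((M + L • Matrix.of fun _ _ => (1 : ℝ) : Matrix (Fin n) (Fin n) ℝ)) i j * ⟪xp j, q i⟫
          = ⟪g, ∑ i, q i⟫) →
      nU xu + nVe xv + nPe xp ≤ C1 * Real.sqrt (∑ i, ∑ j, Λe⁻¹ i j) * ‖g‖) :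
    ∀ m : ℕ,
      nVe (ev (m + 1)) + nPe (ep (m + 1))
        ≤ 3 * C1 * Real.sqrt L * Real.sqrt ρ2 ^ m * ‖∑ i, ep 0 i‖ :=
  fixed_stress_flux_pressure_decay_general n V E D Dv lam L cK Rinv hlam hL hRinv hcK M hM hKorn eu
    ev ep heq1 heq2 heq3 hLge βs hinfsup lam0 hlam0 R hRmin Λe hΛe ρ2 hρ2 nU hnU nVe nPe C1 hC1
    hstab
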